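/- arXiv:2603.27155 — 6 statements merged into one kernel-verified Lean document; each statement's English description precedes it below -/
import Mathlib

section
/- Suppose the iterative sequence (p^k, z^k) of payment–subsidy pairs is defined by: p^0_{ij} = L_{ij}, z^0_i = 0, and at each step, if the net equity E^net_i(p^k, z^k) = α_i e_i + z^k_i + Σ_j (β_i p^k_{ji} − p^k_{ij}) is nonnegative then (p^{k+1}_i, z^{k+1}_i) = (p^k_i, z^k_i), and otherwise p^{k+1}_{ij} = max{0, p^k_{ij} + E^net_i(p^k, z^k) · L_{ij}/L_i} and z^{k+1}_i = max{0, Σ_j p^{k+1}_{ij} − α_i e_i − Σ_j β_i p^k_{ji}}. Then for each pair (i,j) the sequence (p^k_{ij})_k is monotone nonincreasing and bounded below by 0, hence convergent. -/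
open Finset Filter

/-- In the iterative payment–subsidy construction, for each pair `(i,j)` the payment
sequence `(p^k_{ij})_k` is monotone nonincreasing, bounded below by `0`, and hence
convergent. -/
theorem payments_antitone_bounded_convergent {N : Type*} [Fintype N]
    (L : N → N → ℝ) (e α β : N → ℝ)
    (hL : ∀ i j, 0 ≤ L i j) (hLdiag : ∀ i, L i i = 0)
    (hLi : ∀ i, 0 < ∑ j, L i j)
    (hα : ∀ i, α i ∈ Set.Icc (0:ℝ) 1) (hβ : ∀ i, β i ∈ Set.Icc (0:ℝ) 1)
    (p : ℕ → N → N → ℝ) (z : ℕ → N → ℝ)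
    (hp0 : ∀ i j, p 0 i j = L i j) (hz0 : ∀ i, z 0 i = 0)
    (hstep : ∀ k i,
      (0 ≤ α i * e i + z k i + ∑ j, (β i * p k j i - p k i j) →
        (∀ j, p (k+1) i j = p k i j) ∧ z (k+1) i = z k i) ∧
      (α i * e i + z k i + ∑ j, (β i * p k j i - p k i j) < 0 →
        (∀ j, p (k+1) i j =
          max 0 (p k i j +
            (α i * e i + z k i + ∑ j', (β i * p k j' i - p k i j')) * L i j
              / ∑ j', L i j')) ∧
        z (k+1) i = max 0 ((∑ j, p (k+1) i j) - α i * e i - ∑ j, β i * p k j i))) :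
    ∀ i j, Antitone (fun k => p k i j) ∧ (∀ k, 0 ≤ p k i j) ∧
      ∃ l, Tendsto (fun k => p k i j) atTop (nhds l) := by
  intro i j
  have hnn : ∀ k, 0 ≤ p k i j := by
    intro k
    induction k with
    | zero => rw [hp0]; exact hL i j
    | succ k ih =>
      rcases le_or_gt 0 (α i * e i + z k i + ∑ j', (β i * p k j' i - p k i j')) with h | h
      · rw [((hstep k i).1 h).1 j]; exact ih
      · rw [((hstep k i).2 h).1 j]; exact le_max_left _ _
  have hdec : ∀ k, p (k+1) i j ≤ p k i j := by
    intro k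
    rcases le_or_gt 0 (α i * e i + z k i + ∑ j', (β i * p k j' i - p k i j')) with h | h
    · exact (((hstep k i).1 h).1 j).le
    · rw [((hstep k i).2 h).1 j]
      have hnp : (α i * e i + z k i + ∑ j', (β i * p k j' i - p k i j')) * L i j
          / ∑ j', L i j' ≤ 0 :=
        div_nonpos_of_nonpos_of_nonneg
          (mul_nonpos_of_nonpos_of_nonneg h.le (hL i j)) (hLi i).le
      exact max_le (hnn k) (by linarith)
  have hanti : Antitone fun k => p k i j := antitone_nat_of_succ_le hdec
  refine ⟨hanti, hnn, ?_⟩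
  exact ⟨_, tendsto_atTop_ciInf hanti ⟨0, fun x ⟨k, hk⟩ => hk ▸ hnn k⟩⟩
end

section
/- In the iterative sequence (p^k, z^k) defined above, for each bank i the subsidy sequence (z^k_i)_k is monotone nondecreasing and bounded above by max{0, L_i − α_i e_i}; hence it converges. -/
/-!
Payments never leave `[0, L_ij]`. When bank `i` is in deficit `E < 0`, its payments are cut pro
rata by `|E|`, so its new outflow is at least the old one minus `|E|`; the new subsidy, being the
outflow not covered by `α_i e_i` and its inflows, is therefore at least the old subsidy. It is at
most `L_i − α_i e_i`, because the outflow is at most `L_i` and inflows are nonnegative. A monotone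
bounded real sequence converges.
-/

open Finset Filter

section PaymentSubsidy

variable {N : Type*} [Fintype N]

/-- `E^net_i(p, z)`. -/
def netEquity (α e β : N → ℝ) (p : N → N → ℝ) (z : N → ℝ) (i : N) : ℝ :=
  α i * e i + z i + ∑ j, (β i * p j i - p i j)

def IsPaymentSubsidyStep (L : N → N → ℝ) (e α β : N → ℝ) (p p' : N → N → ℝ) (z z' : N → ℝ) :
    Prop :=
  ∀ i,
    (0 ≤ netEquity α e β p z i → (∀ j, p' i j = p i j) ∧ z' i = z i) ∧
    (netEquity α e β p z i < 0 →
      (∀ j, p' i j = max 0 (p i j + netEquity α e β p z i * L i j / ∑ j', L i j')) ∧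
      z' i = max 0 (∑ j, p' i j - α i * e i - ∑ j, β i * p j i))

/-- Also true when `∑ w = 0`: then `E * w j / ∑ w = 0` and nothing is cut. -/
theorem sum_add_le_sum_max_zero_add_mul_div {ι : Type*} [Fintype ι] (x w : ι → ℝ) {E : ℝ}
    (hE : E ≤ 0) : ∑ j, x j + E ≤ ∑ j, max 0 (x j + E * w j / ∑ j', w j') := by
  set S := ∑ j', w j'
  calc ∑ j, x j + E
      ≤ ∑ j, x j + E * (S / S) := by nlinarith [div_self_le_one S]
    _ = ∑ j, (x j + E * w j / S) := by
      rw [sum_add_distrib, ← sum_div, ← mul_sum, mul_div_assoc]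
    _ ≤ ∑ j, max 0 (x j + E * w j / S) := sum_le_sum fun j _ => le_max_right _ _

variable {L : N → N → ℝ} {e α β : N → ℝ} {p p' : N → N → ℝ} {z z' : N → ℝ}

namespace IsPaymentSubsidyStep

theorem payment_mem_Icc (hstep : IsPaymentSubsidyStep L e α β p p' z z')
    (hL : ∀ i j, 0 ≤ L i j) (hp : ∀ i j, p i j ∈ Set.Icc 0 (L i j)) (i j : N) :
    p' i j ∈ Set.Icc 0 (L i j) := by
  rcases le_or_gt 0 (netEquity α e β p z i) with hE | hE
  · rw [((hstep i).1 hE).1 j]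
    exact hp i j
  · rw [((hstep i).2 hE).1 j]
    have hcut : netEquity α e β p z i * L i j / ∑ j', L i j' ≤ 0 :=
      div_nonpos_of_nonpos_of_nonneg (mul_nonpos_of_nonpos_of_nonneg hE.le (hL i j))
        (sum_nonneg fun j' _ => hL i j')
    exact ⟨le_max_left _ _, max_le (hL i j) (by linarith [(hp i j).2])⟩

theorem subsidy_le (hstep : IsPaymentSubsidyStep L e α β p p' z z') (i : N) : z i ≤ z' i := by
  rcases le_or_gt 0 (netEquity α e β p z i) with hE | hE
  · exact ((hstep i).1 hE).2.ge
  · obtain ⟨hp', hz'⟩ := (hstep i).2 hE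
    have hpaid : ∑ j, p i j + netEquity α e β p z i ≤ ∑ j, p' i j := by
      simpa only [hp'] using sum_add_le_sum_max_zero_add_mul_div (p i) (L i) hE.le
    rw [hz']
    refine le_trans ?_ (le_max_right _ _)
    rw [netEquity, sum_sub_distrib] at hpaid
    linarith

theorem subsidy_le_max_zero (hstep : IsPaymentSubsidyStep L e α β p p' z z') (i : N)
    (hβ : 0 ≤ β i) (hp : ∀ j, 0 ≤ p j i) (hp' : ∀ j, p' i j ≤ L i j)
    (hz : z i ≤ max 0 (∑ j, L i j - α i * e i)) :
    z' i ≤ max 0 (∑ j, L i j - α i * e i) := by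
  rcases le_or_gt 0 (netEquity α e β p z i) with hE | hE
  · rwa [((hstep i).1 hE).2]
  · rw [((hstep i).2 hE).2]
    have hpaid : ∑ j, p' i j ≤ ∑ j, L i j := sum_le_sum fun j _ => hp' j
    have hreceived : 0 ≤ ∑ j, β i * p j i := sum_nonneg fun j _ => mul_nonneg hβ (hp j)
    exact max_le_max le_rfl (by linarith)

end IsPaymentSubsidyStep

theorem payments_mem_Icc_of_isPaymentSubsidyStep {p : ℕ → N → N → ℝ} {z : ℕ → N → ℝ}
    (hL : ∀ i j, 0 ≤ L i j) (hp0 : ∀ i j, p 0 i j = L i j)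
    (hstep : ∀ k, IsPaymentSubsidyStep L e α β (p k) (p (k + 1)) (z k) (z (k + 1))) :
    ∀ k i j, p k i j ∈ Set.Icc 0 (L i j) := by
  intro k
  induction k with
  | zero => intro i j; rw [hp0]; exact ⟨hL i j, le_rfl⟩
  | succ k ih => exact (hstep k).payment_mem_Icc hL ih

end PaymentSubsidy

theorem subsidies_monotone_bounded_convergent_general {N : Type*} [Fintype N]
    (L : N → N → ℝ) (e α β : N → ℝ)
    (hL : ∀ i j, 0 ≤ L i j)
    (hβ : ∀ i, β i ∈ Set.Icc (0:ℝ) 1)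
    (p : ℕ → N → N → ℝ) (z : ℕ → N → ℝ)
    (hp0 : ∀ i j, p 0 i j = L i j) (hz0 : ∀ i, z 0 i = 0)
    (hstep : ∀ k i,
      (0 ≤ α i * e i + z k i + ∑ j, (β i * p k j i - p k i j) →
        (∀ j, p (k+1) i j = p k i j) ∧ z (k+1) i = z k i) ∧
      (α i * e i + z k i + ∑ j, (β i * p k j i - p k i j) < 0 →
        (∀ j, p (k+1) i j =
          max 0 (p k i j +
            (α i * e i + z k i + ∑ j', (β i * p k j' i - p k i j')) * L i j
              / ∑ j', L i j')) ∧
        z (k+1) i = max 0 ((∑ j, p (k+1) i j) - α i * e i - ∑ j, β i * p k j i))) :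
    ∀ i, Monotone (fun k => z k i) ∧
      (∀ k, z k i ≤ max 0 ((∑ j, L i j) - α i * e i)) ∧
      ∃ l, Tendsto (fun k => z k i) atTop (nhds l) := by
  have hstep' : ∀ k, IsPaymentSubsidyStep L e α β (p k) (p (k + 1)) (z k) (z (k + 1)) := hstep
  have hpay := payments_mem_Icc_of_isPaymentSubsidyStep hL hp0 hstep'
  intro i
  have hmono : Monotone (z · i) := monotone_nat_of_le_succ fun k => (hstep' k).subsidy_le i
  have hbdd : ∀ k, z k i ≤ max 0 (∑ j, L i j - α i * e i) := by
    intro k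
    induction k with
    | zero => rw [hz0]; exact le_max_left _ _
    | succ k ih =>
      exact (hstep' k).subsidy_le_max_zero i (hβ i).1 (fun j => (hpay k j i).1)
        (fun j => (hpay (k + 1) i j).2) ih
  exact ⟨hmono, hbdd, _, tendsto_atTop_ciSup hmono ⟨_, Set.forall_mem_range.2 hbdd⟩⟩

/-- In the iterative payment–subsidy construction, for each bank `i` the subsidy sequence
`(z^k_i)_k` is monotone nondecreasing and bounded above by `max 0 (L_i − α_i e_i)`;
hence it converges. -/
theorem subsidies_monotone_bounded_convergent {N : Type*} [Fintype N]
    (L : N → N → ℝ) (e α β : N → ℝ)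
    (hL : ∀ i j, 0 ≤ L i j) (hLdiag : ∀ i, L i i = 0)
    (hLi : ∀ i, 0 < ∑ j, L i j)
    (hα : ∀ i, α i ∈ Set.Icc (0:ℝ) 1) (hβ : ∀ i, β i ∈ Set.Icc (0:ℝ) 1)
    (p : ℕ → N → N → ℝ) (z : ℕ → N → ℝ)
    (hp0 : ∀ i j, p 0 i j = L i j) (hz0 : ∀ i, z 0 i = 0)
    (hstep : ∀ k i,
      (0 ≤ α i * e i + z k i + ∑ j, (β i * p k j i - p k i j) →
        (∀ j, p (k+1) i j = p k i j) ∧ z (k+1) i = z k i) ∧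
      (α i * e i + z k i + ∑ j, (β i * p k j i - p k i j) < 0 →
        (∀ j, p (k+1) i j =
          max 0 (p k i j +
            (α i * e i + z k i + ∑ j', (β i * p k j' i - p k i j')) * L i j
              / ∑ j', L i j')) ∧
        z (k+1) i = max 0 ((∑ j, p (k+1) i j) - α i * e i - ∑ j, β i * p k j i))) :
    ∀ i, Monotone (fun k => z k i) ∧
      (∀ k, z k i ≤ max 0 ((∑ j, L i j) - α i * e i)) ∧
      ∃ l, Tendsto (fun k => z k i) atTop (nhds l) :=
  subsidies_monotone_bounded_convergent_general L e α β hL hβ p z hp0 hz0 hstep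
end

section
/- Let (p, z) and (p', z') be two feasible solutions of the proportional subsidy LP (i.e., for each bank i there exists λ_i ∈ [0,1] with p_{ij} = λ_i L_{ij} for all j, z_i ≥ 0, and Σ_j p_{ij} ≤ α̃_i e_i + z_i + Σ_j β̃_i p_{ji}) such that both solutions satisfy the property: z_i > 0 implies p_{ij} = 0 for all j and the budget constraint holds with equality. Define p'' = max{p, p'} and z'' = min{z, z'} coordinate-wise. Then (p'', z'') is also a feasible solution of the LP. -/
open Finset

/-- A feasible solution of the proportional subsidy LP: payments are proportional to
liabilities (with some factor `λ_i ∈ [0,1]` for each bank), subsidies are nonnegative,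
and the budget constraint holds for each bank. -/
def LPFeasible {N : Type*} [Fintype N] (L : N → N → ℝ) (e αt βt : N → ℝ)
    (p : N → N → ℝ) (z : N → ℝ) : Prop :=
  (∀ i, ∃ lam : ℝ, lam ∈ Set.Icc (0:ℝ) 1 ∧ ∀ j, p i j = lam * L i j) ∧
  (∀ i, 0 ≤ z i) ∧
  (∀ i, ∑ j, p i j ≤ αt i * e i + z i + ∑ j, βt i * p j i)

/-- Property (♠): a positive subsidy implies zero payments and a tight budget. -/
def SpadeProp {N : Type*} [Fintype N] (e αt βt : N → ℝ)
    (p : N → N → ℝ) (z : N → ℝ) : Prop :=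
  ∀ i, 0 < z i → (∀ j, p i j = 0) ∧
    ∑ j, p i j = αt i * e i + z i + ∑ j, βt i * p j i

/-- Auxiliary budget lemma for the bank `i` whose subsidy attains the minimum. -/
lemma budget_aux {N : Type*} [Fintype N] (L : N → N → ℝ) (e αt βt : N → ℝ)
    (hL : ∀ i j, 0 ≤ L i j) (hβt : ∀ i, 0 ≤ βt i)
    (p p' : N → N → ℝ) (z z' : N → ℝ)
    (hfeas : LPFeasible L e αt βt p z) (hfeas' : LPFeasible L e αt βt p' z')
    (hspade' : SpadeProp e αt βt p' z') (i : N) (hz : z i ≤ z' i) :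
    ∑ j, max (p i j) (p' i j) ≤ αt i * e i + z i + ∑ j, βt i * max (p j i) (p' j i) := by
  obtain ⟨hprop, hzpos, hbud⟩ := hfeas
  obtain ⟨hprop', hzpos', hbud'⟩ := hfeas'
  have hpnn : ∀ a b, 0 ≤ p a b := by
    intro a b
    obtain ⟨lam, hlam, hp⟩ := hprop a
    rw [hp b]; exact mul_nonneg hlam.1 (hL a b)
  have hp'nn : ∀ a b, 0 ≤ p' a b := by
    intro a b
    obtain ⟨lam, hlam, hp⟩ := hprop' a
    rw [hp b]; exact mul_nonneg hlam.1 (hL a b)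
  have hsum2 : ∑ j, βt i * p j i ≤ ∑ j, βt i * max (p j i) (p' j i) :=
    Finset.sum_le_sum fun j _ => mul_le_mul_of_nonneg_left (le_max_left _ _) (hβt i)
  have hsum2' : ∑ j, βt i * p' j i ≤ ∑ j, βt i * max (p j i) (p' j i) :=
    Finset.sum_le_sum fun j _ => mul_le_mul_of_nonneg_left (le_max_right _ _) (hβt i)
  obtain ⟨lam, hlam, hp⟩ := hprop i
  obtain ⟨lam', hlam', hp'⟩ := hprop' i
  rcases le_total lam' lam with hll | hll
  · -- row of p dominates
    have hmax : ∀ j, max (p i j) (p' i j) = p i j := by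
      intro j
      rw [hp j, hp' j, max_eq_left (mul_le_mul_of_nonneg_right hll (hL i j))]
    calc ∑ j, max (p i j) (p' i j) = ∑ j, p i j := by simp [hmax]
      _ ≤ αt i * e i + z i + ∑ j, βt i * p j i := hbud i
      _ ≤ _ := by linarith
  · -- row of p' dominates
    have hmax : ∀ j, max (p i j) (p' i j) = p' i j := by
      intro j
      rw [hp j, hp' j, max_eq_right (mul_le_mul_of_nonneg_right hll (hL i j))]
    rcases lt_or_eq_of_le hz with hlt | heq
    · -- z i < z' i, so z' i > 0; spade' forces p' i · = 0
      have hz'pos : 0 < z' i := lt_of_le_of_lt (hzpos i) hlt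
      obtain ⟨hp'0, _⟩ := hspade' i hz'pos
      have hmax0 : ∀ j, max (p i j) (p' i j) = p i j := by
        intro j; rw [hp'0 j]; exact max_eq_left (hpnn i j)
      calc ∑ j, max (p i j) (p' i j) = ∑ j, p i j := by simp [hmax0]
        _ ≤ αt i * e i + z i + ∑ j, βt i * p j i := hbud i
        _ ≤ _ := by linarith
    · calc ∑ j, max (p i j) (p' i j) = ∑ j, p' i j := by simp [hmax]
        _ ≤ αt i * e i + z' i + ∑ j, βt i * p' j i := hbud' i
        _ ≤ _ := by rw [← heq]; linarith

/-- Given two feasible solutions of the proportional subsidy LP, both satisfying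
property (♠), the coordinate-wise maximum of the payments together with the
coordinate-wise minimum of the subsidies is again a feasible solution. -/
theorem max_min_feasible {N : Type*} [Fintype N] (L : N → N → ℝ) (e αt βt : N → ℝ)
    (hL : ∀ i j, 0 ≤ L i j) (hLdiag : ∀ i, L i i = 0)
    (hαt : ∀ i, αt i ∈ Set.Icc (0:ℝ) 1) (hβt : ∀ i, βt i ∈ Set.Icc (0:ℝ) 1)
    (p p' : N → N → ℝ) (z z' : N → ℝ)
    (hfeas : LPFeasible L e αt βt p z) (hfeas' : LPFeasible L e αt βt p' z')
    (hspade : SpadeProp e αt βt p z) (hspade' : SpadeProp e αt βt p' z') :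
    LPFeasible L e αt βt (fun i j => max (p i j) (p' i j)) (fun i => min (z i) (z' i)) := by
  refine ⟨?_, ?_, ?_⟩
  · intro i
    obtain ⟨lam, hlam, hp⟩ := hfeas.1 i
    obtain ⟨lam', hlam', hp'⟩ := hfeas'.1 i
    refine ⟨max lam lam', ⟨le_max_of_le_left hlam.1, max_le hlam.2 hlam'.2⟩, ?_⟩
    intro j
    simp only []
    rw [hp j, hp' j, max_mul_of_nonneg _ _ (hL i j)]
  · intro i
    exact le_min (hfeas.2.1 i) (hfeas'.2.1 i)
  · intro i
    rcases le_total (z i) (z' i) with h | h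
    · simpa [min_eq_left h] using
        budget_aux L e αt βt hL (fun i => (hβt i).1) p p' z z' hfeas hfeas' hspade' i h
    · have := budget_aux L e αt βt hL (fun i => (hβt i).1) p' p z' z hfeas' hfeas hspade i h
      simpa [min_eq_right h, max_comm] using this
end

section
/- Among optimal solutions of the subsidy-minimizing LP that satisfy the property that z_i > 0 implies p_{ij} = 0 for all j and the budget constraint holds with equality for i, the subsidy values z_i are unique: any two such optimal solutions (p, z) and (p', z') satisfy z = z'. -/
open Finset

/-- An optimal solution minimizes the total subsidy among all feasible solutions. -/
def LPOptimal {N : Type*} [Fintype N] (L : N → N → ℝ) (e αt βt : N → ℝ)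
    (p : N → N → ℝ) (z : N → ℝ) : Prop :=
  LPFeasible L e αt βt p z ∧
  ∀ p' z', LPFeasible L e αt βt p' z' → ∑ i, z i ≤ ∑ i, z' i

/-- Key pointwise bound: the minimal subsidy of the pointwise-max payment matrix is
bounded by `w i`, given property (♠) for the other solution. -/
lemma zhat_le_aux {N : Type*} [Fintype N]
    (L : N → N → ℝ) (e αt βt : N → ℝ)
    (hL : ∀ i j, 0 ≤ L i j) (hβt : ∀ i, βt i ∈ Set.Icc (0:ℝ) 1)
    (q q' : N → N → ℝ) (w w' : N → ℝ)
    (hf : LPFeasible L e αt βt q w) (hf' : LPFeasible L e αt βt q' w')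
    (hs' : SpadeProp e αt βt q' w') (i : N) :
    max 0 (∑ j, max (q i j) (q' i j) - αt i * e i - ∑ j, βt i * max (q j i) (q' j i))
      ≤ w i := by
  obtain ⟨hq, hw, hb⟩ := hf
  obtain ⟨hq', hw', hb'⟩ := hf'
  have hq0 : ∀ a b, 0 ≤ q a b := by
    intro a b
    obtain ⟨lam, hlam, hpl⟩ := hq a
    rw [hpl b]; exact mul_nonneg hlam.1 (hL a b)
  have hq0' : ∀ a b, 0 ≤ q' a b := by
    intro a b
    obtain ⟨lam, hlam, hpl⟩ := hq' a
    rw [hpl b]; exact mul_nonneg hlam.1 (hL a b)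
  have hin : ∑ j, βt i * q j i ≤ ∑ j, βt i * max (q j i) (q' j i) :=
    Finset.sum_le_sum fun j _ =>
      mul_le_mul_of_nonneg_left (le_max_left _ _) (hβt i).1
  have hin' : ∑ j, βt i * q' j i ≤ ∑ j, βt i * max (q j i) (q' j i) :=
    Finset.sum_le_sum fun j _ =>
      mul_le_mul_of_nonneg_left (le_max_right _ _) (hβt i).1
  have hfin : ∑ j, max (q i j) (q' i j) ≤ ∑ j, q i j →
      max 0 (∑ j, max (q i j) (q' i j) - αt i * e i
        - ∑ j, βt i * max (q j i) (q' j i)) ≤ w i := by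
    intro h
    refine max_le (hw i) ?_
    have := hb i
    linarith
  obtain ⟨lam, hlam, hpl⟩ := hq i
  obtain ⟨lam', hlam', hpl'⟩ := hq' i
  by_cases hcl : lam' ≤ lam
  · refine hfin (le_of_eq (Finset.sum_congr rfl fun j _ => ?_))
    have : q' i j ≤ q i j := by
      rw [hpl j, hpl' j]
      exact mul_le_mul_of_nonneg_right hcl (hL i j)
    exact max_eq_left this
  · push_neg at hcl
    have hqq' : ∀ j, q i j ≤ q' i j := by
      intro j
      rw [hpl j, hpl' j]
      exact mul_le_mul_of_nonneg_right hcl.le (hL i j)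
    by_cases hw'0 : 0 < w' i
    · -- (♠) for the second solution: its row i is zero, hence so is row i of q
      obtain ⟨hz', _⟩ := hs' i hw'0
      refine hfin (le_of_eq (Finset.sum_congr rfl fun j _ => ?_))
      have h1 : q' i j = 0 := hz' j
      have h2 : q i j = 0 := le_antisymm (h1 ▸ hqq' j) (hq0 i j)
      rw [h1, h2]; exact max_self 0
    · have hw'z : w' i = 0 := le_antisymm (not_lt.mp hw'0) (hw' i)
      refine max_le (hw i) (le_trans ?_ (hw i))
      have heq : ∑ j, max (q i j) (q' i j) = ∑ j, q' i j :=
        Finset.sum_congr rfl fun j _ => max_eq_right (hqq' j)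
      have := hb' i
      rw [heq]
      linarith

/-- Among optimal solutions of the subsidy-minimizing LP satisfying property (♠),
the subsidy values are unique. -/
theorem optimal_subsidies_unique {N : Type*} [Fintype N]
    (L : N → N → ℝ) (e αt βt : N → ℝ)
    (hL : ∀ i j, 0 ≤ L i j) (hLdiag : ∀ i, L i i = 0)
    (hαt : ∀ i, αt i ∈ Set.Icc (0:ℝ) 1) (hβt : ∀ i, βt i ∈ Set.Icc (0:ℝ) 1)
    (p p' : N → N → ℝ) (z z' : N → ℝ)
    (hopt : LPOptimal L e αt βt p z) (hopt' : LPOptimal L e αt βt p' z')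
    (hspade : SpadeProp e αt βt p z) (hspade' : SpadeProp e αt βt p' z') :
    z = z' := by
  classical
  set phat : N → N → ℝ := fun i j => max (p i j) (p' i j) with hphat
  set zhat : N → ℝ := fun i =>
    max 0 (∑ j, phat i j - αt i * e i - ∑ j, βt i * phat j i) with hzhat
  have hfeas : LPFeasible L e αt βt phat zhat := by
    refine ⟨fun i => ?_, fun i => le_max_left _ _, fun i => ?_⟩
    · obtain ⟨lam, hlam, hpl⟩ := hopt.1.1 i
      obtain ⟨lam', hlam', hpl'⟩ := hopt'.1.1 i
      refine ⟨max lam lam', ⟨le_max_of_le_left hlam.1, max_le hlam.2 hlam'.2⟩,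
        fun j => ?_⟩
      simp only [hphat]
      rw [hpl j, hpl' j, max_mul_of_nonneg _ _ (hL i j)]
    · have : ∑ j, phat i j - αt i * e i - ∑ j, βt i * phat j i ≤ zhat i :=
        le_max_right _ _
      linarith
  have h1 : ∀ i, zhat i ≤ z i := fun i =>
    zhat_le_aux L e αt βt hL hβt p p' z z' hopt.1 hopt'.1 hspade' i
  have h1' : ∀ i, zhat i ≤ z' i := by
    intro i
    have := zhat_le_aux L e αt βt hL hβt p' p z' z hopt'.1 hopt.1 hspade i
    have hm : ∀ a b, max (p' a b) (p a b) = phat a b := fun a b => max_comm _ _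
    simpa only [hm] using this
  have hs1 : ∑ i, z i ≤ ∑ i, zhat i := hopt.2 phat zhat hfeas
  have hs1' : ∑ i, z' i ≤ ∑ i, zhat i := hopt'.2 phat zhat hfeas
  have he : ∀ i ∈ Finset.univ, z i = zhat i := by
    have hle : ∀ i ∈ (Finset.univ : Finset N), zhat i ≤ z i := fun i _ => h1 i
    intro i hi
    exact ((Finset.sum_eq_sum_iff_of_le hle).mp
      (le_antisymm (Finset.sum_le_sum hle) hs1) i hi).symm
  have he' : ∀ i ∈ Finset.univ, z' i = zhat i := by
    have hle : ∀ i ∈ (Finset.univ : Finset N), zhat i ≤ z' i := fun i _ => h1' i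
    intro i hi
    exact ((Finset.sum_eq_sum_iff_of_le hle).mp
      (le_antisymm (Finset.sum_le_sum hle) hs1') i hi).symm
  funext i
  rw [he i (Finset.mem_univ i), he' i (Finset.mem_univ i)]
end

section
/- If all initial endowments are nonnegative, then for any financial market there is a compression C (obtained by repeatedly compressing cycles until the liability graph is acyclic) such that the market M−C admits a bank with no outgoing liabilities, and any bank with no outgoing liabilities and nonnegative endowment does not default under any proportional clearing vector. -/
/-!
Among all compressions `C`, take one whose residual `L - C` has the fewest positive liabilities.
If `L - C` had no sink, every bank would owe someone, so following one positive liability out of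
each bank eventually closes a cycle (a periodic orbit of the successor map). Removing the cycle's
smallest liability from each of its edges is a further compression that erases a liability,
contradicting minimality. A sink owes nothing, and since payments it receives are nonnegative,
a nonnegative endowment keeps it from defaulting.
-/

open Finset

/-- `p` is a proportional clearing vector for the market with liabilities `L`,
endowments `e` and default cost parameters `α`, `β`. -/
def IsPropClearing {N : Type*} [Fintype N] (L : N → N → ℝ) (e α β : N → ℝ)
    (p : N → N → ℝ) : Prop :=
  ∀ i j, p i j =
    if (∑ j', L i j') ≤ e i + ∑ j', p j' i then L i j
    else max 0 (L i j / (∑ j', L i j') * (α i * e i + β i * ∑ j', p j' i))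

open Function

theorem Function.exists_mem_periodicPts {α : Type*} [Finite α] [Nonempty α] (f : α → α) :
    ∃ x, x ∈ periodicPts f := by
  obtain ⟨m, n, hne, heq⟩ :=
    Finite.exists_ne_map_eq_of_infinite fun n => f^[n] (Classical.arbitrary α)
  wlog hlt : m < n generalizing m n
  · exact this n m hne.symm heq.symm (by omega)
  refine ⟨f^[m] (Classical.arbitrary α), mk_mem_periodicPts (Nat.sub_pos_of_lt hlt) ?_⟩
  change f^[n - m] (f^[m] _) = _
  rw [← iterate_add_apply, Nat.sub_add_cancel hlt.le, heq]

section Circulation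

variable {N : Type*}

def IsCirculation [Fintype N] (C : N → N → ℝ) : Prop :=
  ∀ i, ∑ j, C j i = ∑ j, C i j

def IsCompression [Fintype N] (L C : N → N → ℝ) : Prop :=
  (∀ i j, 0 ≤ C i j ∧ C i j ≤ L i j) ∧ IsCirculation C

def IsSink (R : N → N → ℝ) (b : N) : Prop :=
  ∀ j, R b j = 0

noncomputable def posSupport [Fintype N] (R : N → N → ℝ) : Finset (N × N) :=
  {q | 0 < R q.1 q.2}

variable [Fintype N] {L C D R : N → N → ℝ}

theorem IsCirculation.add (hC : IsCirculation C) (hD : IsCirculation D) :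
    IsCirculation (C + D) := fun i => by
  simp only [Pi.add_apply, sum_add_distrib, hC i, hD i]

theorem isCompression_zero (hL : ∀ i j, 0 ≤ L i j) : IsCompression L 0 :=
  ⟨fun i j => ⟨le_rfl, hL i j⟩, fun _ => rfl⟩

theorem IsCompression.sub_nonneg (hC : IsCompression L C) (i j : N) : 0 ≤ (L - C) i j :=
  _root_.sub_nonneg.2 (hC.1 i j).2

theorem IsCompression.add (hC : IsCompression L C) (hD : IsCompression (L - C) D) :
    IsCompression L (C + D) := by
  refine ⟨fun i j => ⟨add_nonneg (hC.1 i j).1 (hD.1 i j).1, ?_⟩, hC.2.add hD.2⟩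
  have := (hD.1 i j).2
  simp only [Pi.add_apply, Pi.sub_apply] at this ⊢
  linarith

theorem posSupport_sub_ssubset (hD : ∀ i j, 0 ≤ D i j) {a b : N} (hab : 0 < R a b)
    (hDab : D a b = R a b) : posSupport (R - D) ⊂ posSupport R := by
  refine ssubset_iff_of_subset (fun q hq => ?_) |>.2 ⟨(a, b), ?_, ?_⟩
  · simp only [posSupport, mem_filter, mem_univ, true_and, Pi.sub_apply] at hq ⊢
    linarith [hD q.1 q.2]
  · simpa [posSupport] using hab
  · simp [posSupport, hDab]

end Circulation

section CycleFlow

variable {N : Type*} [DecidableEq N] (f : N → N) (y : N) (ε : ℝ)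

noncomputable def cycleFlow (i j : N) : ℝ :=
  ∑ k ∈ range (minimalPeriod f y), if i = f^[k] y ∧ j = f^[k + 1] y then ε else 0

variable {f y ε}

theorem cycleFlow_nonneg (hε : 0 ≤ ε) (i j : N) : 0 ≤ cycleFlow f y ε i j :=
  sum_nonneg fun _ _ => by split_ifs <;> simp [hε]

theorem cycleFlow_iterate {k : ℕ} (hk : k < minimalPeriod f y) :
    cycleFlow f y ε (f^[k] y) (f^[k + 1] y) = ε := by
  rw [cycleFlow, sum_eq_single_of_mem k (mem_range.2 hk)]
  · simp
  · intro l hl hlk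
    rw [if_neg]
    rintro ⟨hkl, -⟩
    exact hlk (iterate_injOn_Iio_minimalPeriod (mem_range.1 hl) hk hkl.symm)

theorem cycleFlow_le {R : N → N → ℝ} (hR : ∀ i j, 0 ≤ R i j)
    (hε : ∀ k < minimalPeriod f y, ε ≤ R (f^[k] y) (f^[k + 1] y)) (i j : N) :
    cycleFlow f y ε i j ≤ R i j := by
  by_cases hij : ∃ k < minimalPeriod f y, i = f^[k] y ∧ j = f^[k + 1] y
  · obtain ⟨k, hk, rfl, rfl⟩ := hij
    rw [cycleFlow_iterate hk]
    exact hε k hk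
  · push Not at hij
    rw [cycleFlow, sum_eq_zero fun k hk => if_neg fun h => hij k (mem_range.1 hk) h.1 h.2]
    exact hR i j

theorem isCirculation_cycleFlow [Fintype N] : IsCirculation (cycleFlow f y ε) := by
  intro i
  set g : ℕ → ℝ := fun k => if i = f^[k] y then ε else 0
  have hout : ∑ j, cycleFlow f y ε i j = ∑ k ∈ range (minimalPeriod f y), g k := by
    simp only [cycleFlow]
    rw [sum_comm]
    refine sum_congr rfl fun k _ => ?_
    by_cases h : i = f^[k] y <;> simp [g, h]
  have hin : ∑ j, cycleFlow f y ε j i = ∑ k ∈ range (minimalPeriod f y), g (k + 1) := by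
    simp only [cycleFlow]
    rw [sum_comm]
    refine sum_congr rfl fun k _ => ?_
    by_cases h : i = f^[k] (f y) <;> simp [g, h]
  -- inflow minus outflow telescopes to `g (minimalPeriod f y) - g 0`, which vanishes
  rw [hout, hin, ← sub_eq_zero, ← sum_sub_distrib, sum_range_sub, sub_eq_zero]
  simp only [g]
  rw [iterate_minimalPeriod]
  rfl

end CycleFlow

section Compression

variable {N : Type*} [Fintype N]

theorem exists_isCompression_posSupport_sub_ssubset [Nonempty N] {R : N → N → ℝ}
    (hR : ∀ i j, 0 ≤ R i j) (hout : ∀ i, ∃ j, 0 < R i j) :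
    ∃ D, IsCompression R D ∧ posSupport (R - D) ⊂ posSupport R := by
  classical
  choose f hf using hout
  obtain ⟨y, hy⟩ := exists_mem_periodicPts f
  have hedge : ∀ k, 0 < R (f^[k] y) (f^[k + 1] y) := fun k => by
    rw [iterate_succ_apply']
    exact hf _
  obtain ⟨k₀, hk₀, hmin⟩ := (range (minimalPeriod f y)).exists_min_image
    (fun k => R (f^[k] y) (f^[k + 1] y)) ⟨0, mem_range.2 (minimalPeriod_pos_of_mem_periodicPts hy)⟩
  have hε : ∀ k < minimalPeriod f y, R (f^[k₀] y) (f^[k₀ + 1] y) ≤ R (f^[k] y) (f^[k + 1] y) :=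
    fun k hk => hmin k (mem_range.2 hk)
  refine ⟨cycleFlow f y (R (f^[k₀] y) (f^[k₀ + 1] y)),
    ⟨fun i j => ⟨cycleFlow_nonneg (hedge k₀).le i j, cycleFlow_le hR hε i j⟩,
      isCirculation_cycleFlow⟩,
    posSupport_sub_ssubset (cycleFlow_nonneg (hedge k₀).le) (hedge k₀)
      (cycleFlow_iterate (mem_range.1 hk₀))⟩

theorem exists_isCompression_isSink_sub [Nonempty N] {L : N → N → ℝ} (hL : ∀ i j, 0 ≤ L i j) :
    ∃ C, IsCompression L C ∧ ∃ b, IsSink (L - C) b := by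
  obtain ⟨C, hC, hmin⟩ := (InvImage.wf (fun C => #(posSupport (L - C))) wellFounded_lt).has_min
    {C | IsCompression L C} ⟨0, isCompression_zero hL⟩
  refine ⟨C, hC, ?_⟩
  by_contra! hsink
  have hout : ∀ i, ∃ j, 0 < (L - C) i j := fun i => by
    obtain ⟨j, hj⟩ := not_forall.1 (hsink i)
    exact ⟨j, (hC.sub_nonneg i j).lt_of_ne' hj⟩
  obtain ⟨D, hD, hlt⟩ := exists_isCompression_posSupport_sub_ssubset hC.sub_nonneg hout
  refine hmin (C + D) (hC.add hD) ?_
  change #(posSupport (L - (C + D))) < _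
  rw [← sub_sub]
  exact card_lt_card hlt

end Compression

section Clearing

variable {N : Type*} [Fintype N] {R : N → N → ℝ} {e α β : N → ℝ} {p : N → N → ℝ}

theorem IsPropClearing.nonneg (hR : ∀ i j, 0 ≤ R i j) (hp : IsPropClearing R e α β p)
    (i j : N) : 0 ≤ p i j := by
  rw [hp i j]
  split_ifs
  · exact hR i j
  · exact le_max_left _ _

theorem IsPropClearing.not_default_of_isSink (hR : ∀ i j, 0 ≤ R i j)
    (hp : IsPropClearing R e α β p) {b : N} (hb : IsSink R b) (he : 0 ≤ e b) :
    ¬ e b + ∑ j, p j b < ∑ j, R b j := by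
  rw [sum_eq_zero fun j _ => hb j, not_lt]
  exact add_nonneg he (sum_nonneg fun j _ => hp.nonneg hR j b)

end Clearing

theorem exists_compression_with_sink_general {N : Type*} [Fintype N] [Nonempty N]
    (L : N → N → ℝ) (e α β : N → ℝ)
    (hL : ∀ i j, 0 ≤ L i j) (he : ∀ i, 0 ≤ e i) :
    ∃ C : N → N → ℝ,
      (∀ i j, 0 ≤ C i j ∧ C i j ≤ L i j) ∧
      (∀ i, ∑ j, C j i = ∑ j, C i j) ∧
      (∃ b, ∀ j, L b j - C b j = 0) ∧
      (∀ b, (∀ j, L b j - C b j = 0) →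
        ∀ p, IsPropClearing (fun i j => L i j - C i j) e α β p →
          ¬ (e b + ∑ j, p j b < ∑ j, (L b j - C b j))) := by
  obtain ⟨C, hC, hsink⟩ := exists_isCompression_isSink_sub hL
  exact ⟨C, hC.1, hC.2, hsink, fun b hb p hp => hp.not_default_of_isSink hC.sub_nonneg hb (he b)⟩

/-- If all initial endowments are nonnegative, then every financial market admits a
compression `C` such that `M − C` has a bank with no outgoing liabilities, and every
bank with no outgoing liabilities (having nonnegative endowment) does not default under
any proportional clearing vector of `M − C`. -/
theorem exists_compression_with_sink {N : Type*} [Fintype N] [Nonempty N]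
    (L : N → N → ℝ) (e α β : N → ℝ)
    (hL : ∀ i j, 0 ≤ L i j) (hLdiag : ∀ i, L i i = 0) (he : ∀ i, 0 ≤ e i)
    (hα : ∀ i, α i ∈ Set.Icc (0:ℝ) 1) (hβ : ∀ i, β i ∈ Set.Icc (0:ℝ) 1) :
    ∃ C : N → N → ℝ,
      (∀ i j, 0 ≤ C i j ∧ C i j ≤ L i j) ∧
      (∀ i, ∑ j, C j i = ∑ j, C i j) ∧
      (∃ b, ∀ j, L b j - C b j = 0) ∧
      (∀ b, (∀ j, L b j - C b j = 0) →
        ∀ p, IsPropClearing (fun i j => L i j - C i j) e α β p →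
          ¬ (e b + ∑ j, p j b < ∑ j, (L b j - C b j))) :=
  exists_compression_with_sink_general L e α β hL he
end

section
/- Let C be a cycle in the liability digraph of market M, let ε = min over arcs (i,j) of C of L_{ij}, and suppose p is a proportional clearing vector for M under which no bank on C defaults. Then p' = p − ε·χ^C is a proportional clearing vector for the market M − ε·χ^C with the same set of defaulting banks. -/
open Finset

open Classical in
/-- The characteristic vector of the arc set of the cycle `c` of length `ℓ`. -/
noncomputable def cycleChi {N : Type*} (ℓ : ℕ) (hℓ : 0 < ℓ) (c : Fin ℓ → N) :
    N → N → ℝ :=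
  fun i j =>
    if ∃ t : Fin ℓ, c t = i ∧ c ⟨(t.val + 1) % ℓ, Nat.mod_lt _ hℓ⟩ = j then 1 else 0

open Classical in
lemma chiRow {N : Type*} (ℓ : ℕ) (hℓ : 0 < ℓ) (c : Fin ℓ → N)
    (hcinj : Function.Injective c) (t : Fin ℓ) (j : N) :
    cycleChi ℓ hℓ c (c t) j =
      if j = c ⟨(t.val + 1) % ℓ, Nat.mod_lt _ hℓ⟩ then 1 else 0 := by
  unfold cycleChi
  by_cases h : ∃ s : Fin ℓ, c s = c t ∧ c ⟨(s.val + 1) % ℓ, Nat.mod_lt _ hℓ⟩ = j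
  · obtain ⟨s, hs1, hs2⟩ := h
    have hst : s = t := hcinj hs1
    subst hst
    rw [if_pos ⟨s, rfl, hs2⟩, if_pos hs2.symm]
  · rw [if_neg h, if_neg]
    intro hj
    exact h ⟨t, rfl, hj.symm⟩

open Classical in
lemma chiCol {N : Type*} (ℓ : ℕ) (hℓ : 0 < ℓ) (c : Fin ℓ → N)
    (hcinj : Function.Injective c) (t : Fin ℓ) (j : N) :
    cycleChi ℓ hℓ c j (c t) =
      if j = c ⟨(t.val + (ℓ - 1)) % ℓ, Nat.mod_lt _ hℓ⟩ then 1 else 0 := by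
  have hpred : ∀ s : Fin ℓ, ((s.val + (ℓ - 1)) % ℓ + 1) % ℓ = s.val := by
    intro s
    rw [Nat.mod_add_mod]
    have h1 : s.val + (ℓ - 1) + 1 = s.val + ℓ := by omega
    rw [h1, Nat.add_mod_right, Nat.mod_eq_of_lt s.isLt]
  unfold cycleChi
  by_cases h : ∃ s : Fin ℓ, c s = j ∧ c ⟨(s.val + 1) % ℓ, Nat.mod_lt _ hℓ⟩ = c t
  · obtain ⟨s, hs1, hs2⟩ := h
    have hst : (⟨(s.val + 1) % ℓ, Nat.mod_lt _ hℓ⟩ : Fin ℓ) = t := hcinj hs2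
    have hs : s = ⟨(t.val + (ℓ - 1)) % ℓ, Nat.mod_lt _ hℓ⟩ := by
      apply Fin.ext
      have hv : (s.val + 1) % ℓ = t.val := congrArg Fin.val hst
      show s.val = (t.val + (ℓ - 1)) % ℓ
      rw [← hv, Nat.mod_add_mod]
      have h1 : s.val + 1 + (ℓ - 1) = s.val + ℓ := by omega
      rw [h1, Nat.add_mod_right, Nat.mod_eq_of_lt s.isLt]
    rw [if_pos ⟨s, hs1, hs2⟩, if_pos (hs1 ▸ congrArg c hs)]
  · rw [if_neg h, if_neg]
    intro hj
    refine h ⟨⟨(t.val + (ℓ - 1)) % ℓ, Nat.mod_lt _ hℓ⟩, hj.symm ▸ rfl, ?_⟩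
    exact congrArg c (Fin.ext (hpred t))

/-- If `C` is a liability cycle of `M`, `ε` is the minimum liability along the cycle and
`p` is a proportional clearing vector for `M` under which no bank on the cycle defaults,
then `p − ε·χ^C` is a proportional clearing vector for `M − ε·χ^C` with the same set of
defaulting banks. -/
theorem cycle_compression_preserves_clearing {N : Type*} [Fintype N]
    (L : N → N → ℝ) (e α β : N → ℝ)
    (hL : ∀ i j, 0 ≤ L i j) (hLdiag : ∀ i, L i i = 0)
    (hα : ∀ i, α i ∈ Set.Icc (0:ℝ) 1) (hβ : ∀ i, β i ∈ Set.Icc (0:ℝ) 1)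
    (ℓ : ℕ) (hℓ : 0 < ℓ) (c : Fin ℓ → N) (hcinj : Function.Injective c)
    (harc : ∀ t : Fin ℓ, 0 < L (c t) (c ⟨(t.val + 1) % ℓ, Nat.mod_lt _ hℓ⟩))
    (ε : ℝ)
    (hε : ε = Finset.univ.inf' ⟨⟨0, hℓ⟩, Finset.mem_univ _⟩
      (fun t : Fin ℓ => L (c t) (c ⟨(t.val + 1) % ℓ, Nat.mod_lt _ hℓ⟩)))
    (p : N → N → ℝ) (hp : IsPropClearing L e α β p)
    (hnodef : ∀ t : Fin ℓ, ¬ (e (c t) + ∑ j, p j (c t) < ∑ j, L (c t) j)) :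
    IsPropClearing (fun i j => L i j - ε * cycleChi ℓ hℓ c i j) e α β
      (fun i j => p i j - ε * cycleChi ℓ hℓ c i j) ∧
    ∀ i, (e i + ∑ j, p j i < ∑ j, L i j) ↔
      (e i + ∑ j, (p j i - ε * cycleChi ℓ hℓ c j i)
        < ∑ j, (L i j - ε * cycleChi ℓ hℓ c i j)) := by
  classical
  set χ := cycleChi ℓ hℓ c with hχ
  -- value of χ off the cycle
  have hoff : ∀ i, (¬ ∃ t, c t = i) → ∀ j, χ i j = 0 ∧ χ j i = 0 := by
    intro i hi j
    constructor
    · rw [hχ]; unfold cycleChi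
      rw [if_neg]
      rintro ⟨t, ht1, -⟩
      exact hi ⟨t, ht1⟩
    · rw [hχ]; unfold cycleChi
      rw [if_neg]
      rintro ⟨t, -, ht2⟩
      exact hi ⟨_, ht2⟩
  set S : N → ℝ := fun i => if ∃ t, c t = i then ε else 0 with hS
  have hrow : ∀ i, ∑ j, ε * χ i j = S i := by
    intro i
    by_cases hi : ∃ t, c t = i
    · obtain ⟨t, rfl⟩ := hi
      simp only [hχ, chiRow ℓ hℓ c hcinj t, mul_ite, mul_one, mul_zero]
      rw [Finset.sum_ite_eq' Finset.univ]
      simp [hS]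
    · rw [hS]
      simp only [if_neg hi]
      apply Finset.sum_eq_zero
      intro j _
      rw [(hoff i hi j).1, mul_zero]
  have hcol : ∀ i, ∑ j, ε * χ j i = S i := by
    intro i
    by_cases hi : ∃ t, c t = i
    · obtain ⟨t, rfl⟩ := hi
      simp only [hχ, chiCol ℓ hℓ c hcinj t, mul_ite, mul_one, mul_zero]
      rw [Finset.sum_ite_eq' Finset.univ]
      simp [hS]
    · rw [hS]
      simp only [if_neg hi]
      apply Finset.sum_eq_zero
      intro j _
      rw [(hoff i hi j).2, mul_zero]
  have hLsum : ∀ i, (∑ j, (L i j - ε * χ i j)) = (∑ j, L i j) - S i := by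
    intro i
    rw [Finset.sum_sub_distrib, hrow]
  have hpsum : ∀ i, (∑ j, (p j i - ε * χ j i)) = (∑ j, p j i) - S i := by
    intro i
    rw [Finset.sum_sub_distrib, hcol]
  constructor
  · intro i j
    simp only
    rw [hLsum, hpsum]
    by_cases hi : ∃ t, c t = i
    · obtain ⟨t, rfl⟩ := hi
      have hsolv : (∑ j', L (c t) j') ≤ e (c t) + ∑ j', p j' (c t) := le_of_not_gt (hnodef t)
      have hpij : p (c t) j = L (c t) j := by
        have := hp (c t) j
        rwa [if_pos hsolv] at this
      rw [if_pos (by linarith), hpij]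
    · have hS0 : S i = 0 := by rw [hS]; simp [hi]
      have hχ0 : χ i j = 0 := (hoff i hi j).1
      rw [hS0, hχ0, mul_zero, sub_zero, sub_zero, sub_zero, sub_zero]
      exact hp i j
  · intro i
    rw [hLsum, hpsum]
    constructor <;> intro h <;> linarith
end
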